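/- Let 1 ≤ p ≤ ∞, q the conjugate exponent, Y ∈ L^q_d and v ∈ M, and define R : L^p_d → 𝒫(M) by R(X) = F^M_{(Y,v)}[−X] = {u ∈ M : E[(−X)ᵀY] ≤ vᵀu}. Then R is L^p_d(K_T)-monotone (i.e., K_T-compatible) if and only if Y ∈ L^q_d(K_T^+). -/

import Mathlib

open MeasureTheory Set Filter Topology Pointwise ENNReal

noncomputable section

/-- `ℝ^d` -/
abbrev Vec (d : ℕ) := Fin d → ℝ

/-- the Euclidean dot (bilinear) pairing `vᵀu` on `ℝ^d` -/
def dotp {d : ℕ} (v u : Vec d) : ℝ := ∑ i, v i * u i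

/-- the nonnegative orthant `ℝ^d_+` -/
def posOrthant (d : ℕ) : Set (Vec d) := {x | ∀ i, 0 ≤ x i}

/-- the (positive) dual cone of a set `C ⊆ ℝ^d` -/
def posDual {d : ℕ} (C : Set (Vec d)) : Set (Vec d) := {v | ∀ x ∈ C, 0 ≤ dotp v x}

/-- the orthogonal complement `M^⊥` of a subspace -/
def perpSet {d : ℕ} (M : Submodule ℝ (Vec d)) : Set (Vec d) := {v | ∀ u ∈ M, dotp v u = 0}

/-- the half space `G(w) = {x : wᵀx ≥ 0}` -/
def Gset {d : ℕ} (w : Vec d) : Set (Vec d) := {x | 0 ≤ dotp w x}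

/-- a closed convex cone `K` with `ℝ^d_+ ⊆ K ≠ ℝ^d` (a solvency cone) -/
def IsSolvencyCone {d : ℕ} (K : Set (Vec d)) : Prop :=
  IsClosed K ∧ Convex ℝ K ∧ (∀ t : ℝ, 0 < t → ∀ x ∈ K, t • x ∈ K) ∧
    posOrthant d ⊆ K ∧ K ≠ univ

variable {Ω : Type*} [MeasurableSpace Ω]

/-- the constant (deterministic) random vector `u𝟙 ∈ L^p_d` -/
def constLp (μ : Measure Ω) [IsFiniteMeasure μ] (d : ℕ) (p : ℝ≥0∞) (u : Vec d) :
    Lp (Vec d) p μ := MeasureTheory.Lp.const p μ u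

/-- the cone `(L^p_d)_+` of a.s. componentwise nonnegative elements of `L^p_d` -/
def LpNonneg (μ : Measure Ω) [IsFiniteMeasure μ] (d : ℕ) (p : ℝ≥0∞) :
    Set (Lp (Vec d) p μ) := {X | ∀ᵐ ω ∂μ, ∀ i, 0 ≤ X ω i}

/-- an acceptance set in `L^p_d` -/
def IsAcceptanceSet {μ : Measure Ω} [IsFiniteMeasure μ] {d : ℕ} {p : ℝ≥0∞}
    (A : Set (Lp (Vec d) p μ)) : Prop :=
  (∃ x : Vec d, constLp μ d p x ∈ A) ∧ (∃ x : Vec d, constLp μ d p x ∉ A) ∧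
    ∀ X ∈ A, ∀ Y ∈ LpNonneg μ d p, X + Y ∈ A

/-- the function `R_A` induced by a set `A ⊆ L^p_d` -/
def RA {μ : Measure Ω} [IsFiniteMeasure μ] {d : ℕ} {p : ℝ≥0∞} (M : Submodule ℝ (Vec d))
    (A : Set (Lp (Vec d) p μ)) (X : Lp (Vec d) p μ) : Set (Vec d) :=
  {u | u ∈ M ∧ X + constLp μ d p u ∈ A}

/-- the acceptance set `A_R` induced by a function `R` -/
def AR {μ : Measure Ω} {d : ℕ} {p : ℝ≥0∞} (R : Lp (Vec d) p μ → Set (Vec d)) :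
    Set (Lp (Vec d) p μ) := {X | 0 ∈ R X}

/-- `R` is translative in `M`: `R(X + u𝟙) = R(X) − u` for `u ∈ M` -/
def MTranslative {μ : Measure Ω} [IsFiniteMeasure μ] {d : ℕ} {p : ℝ≥0∞}
    (M : Submodule ℝ (Vec d)) (R : Lp (Vec d) p μ → Set (Vec d)) : Prop :=
  ∀ X : Lp (Vec d) p μ, ∀ u ∈ M, R (X + constLp μ d p u) = (fun w => w - u) '' R X

/-- `R` is `B`-monotone: `X² − X¹ ∈ B ⟹ R(X²) ⊇ R(X¹)` -/
def BMonotone {μ : Measure Ω} {d : ℕ} {p : ℝ≥0∞} (B : Set (Lp (Vec d) p μ))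
    (R : Lp (Vec d) p μ → Set (Vec d)) : Prop :=
  ∀ X₁ X₂ : Lp (Vec d) p μ, X₂ - X₁ ∈ B → R X₁ ⊆ R X₂

/-- a (set-valued) risk measure: an `M`-translative, `(L^p_d)_+`-monotone function
mapping into the power set of `M` -/
def IsRiskMeasure {μ : Measure Ω} [IsFiniteMeasure μ] {d : ℕ} {p : ℝ≥0∞}
    (M : Submodule ℝ (Vec d)) (R : Lp (Vec d) p μ → Set (Vec d)) : Prop :=
  (∀ X, R X ⊆ (M : Set (Vec d))) ∧ MTranslative M R ∧ BMonotone (LpNonneg μ d p) R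

/-- `R` is finite at zero -/
def FiniteAtZero {μ : Measure Ω} {d : ℕ} {p : ℝ≥0∞} (M : Submodule ℝ (Vec d))
    (R : Lp (Vec d) p μ → Set (Vec d)) : Prop :=
  R 0 ≠ ∅ ∧ R 0 ≠ (M : Set (Vec d))

/-- measurability of a set-valued map -/
def MeasurableSetValued {d : ℕ} (K : Ω → Set (Vec d)) : Prop :=
  ∀ B : Set (Vec d), IsOpen B → MeasurableSet {ω | (K ω ∩ B).Nonempty}

/-- `L^p_d(K) = {X ∈ L^p_d : X(ω) ∈ K(ω)` a.s.`}` -/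
def LpSection (μ : Measure Ω) [IsFiniteMeasure μ] (d : ℕ) (p : ℝ≥0∞)
    (K : Ω → Set (Vec d)) : Set (Lp (Vec d) p μ) := {X | ∀ᵐ ω ∂μ, X ω ∈ K ω}


/-- the market model hypotheses on `K_T`: measurable set-valued map with solvency-cone
values -/
def IsMarketMapKT {d : ℕ} (KT : Ω → Set (Vec d)) : Prop :=
  MeasurableSetValued KT ∧ ∀ ω, IsSolvencyCone (KT ω)

/-- `K_T`-compatibility of an acceptance set: `A + L^p_d(K_T) ⊆ A` -/
def KTcompatSet {μ : Measure Ω} [IsFiniteMeasure μ] {d : ℕ} {p : ℝ≥0∞}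
    (KT : Ω → Set (Vec d)) (A : Set (Lp (Vec d) p μ)) : Prop :=
  ∀ X ∈ A, ∀ Y ∈ LpSection μ d p KT, X + Y ∈ A

/-- `K_I`-compatibility of an acceptance set: `A + K_I^M𝟙 ⊆ A` -/
def KIcompatSet {μ : Measure Ω} [IsFiniteMeasure μ] {d : ℕ} {p : ℝ≥0∞}
    (M : Submodule ℝ (Vec d)) (KI : Set (Vec d)) (A : Set (Lp (Vec d) p μ)) : Prop :=
  ∀ X ∈ A, ∀ k ∈ KI ∩ (M : Set (Vec d)), X + constLp μ d p k ∈ A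

/-- `K_T`-compatibility of a risk measure: `L^p_d(K_T)`-monotonicity -/
def KTcompatR {μ : Measure Ω} [IsFiniteMeasure μ] {d : ℕ} {p : ℝ≥0∞}
    (KT : Ω → Set (Vec d)) (R : Lp (Vec d) p μ → Set (Vec d)) : Prop :=
  BMonotone (LpSection μ d p KT) R

/-- `K_I`-compatibility of a risk measure: its values `D` satisfy `D = D + K_I^M` -/
def KIcompatR {μ : Measure Ω} {d : ℕ} {p : ℝ≥0∞}
    (M : Submodule ℝ (Vec d)) (KI : Set (Vec d)) (R : Lp (Vec d) p μ → Set (Vec d)) :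
    Prop :=
  ∀ X, R X + (KI ∩ (M : Set (Vec d))) = R X

/-- the bilinear pairing `(X,Y) ↦ E[XᵀY]` between `L^p_d` and `L^q_d` -/
def pairLp {μ : Measure Ω} {d : ℕ} {p q : ℝ≥0∞} (X : Lp (Vec d) p μ)
    (Y : Lp (Vec d) q μ) : ℝ := ∫ ω, dotp (X ω) (Y ω) ∂μ

/-- the componentwise expectation `E[Y] ∈ ℝ^d` -/
def meanVec {d : ℕ} {r : ℝ≥0∞} (μ : Measure Ω) (Y : Lp (Vec d) r μ) : Vec d :=
  fun i => ∫ ω, Y ω i ∂μ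

/-- the set-valued function `F^M_{(Y,v)}[X] = {u ∈ M : E[XᵀY] ≤ vᵀu}` -/
def FM {μ : Measure Ω} {d : ℕ} {p q : ℝ≥0∞} (M : Submodule ℝ (Vec d))
    (Y : Lp (Vec d) q μ) (v : Vec d) (X : Lp (Vec d) p μ) : Set (Vec d) :=
  {u | u ∈ M ∧ pairLp X Y ≤ dotp v u}

/-!
Writing `R(X) = {u ∈ M : -E[XᵀY] ≤ vᵀu}`, monotonicity of `R` along `L^p_d(K_T)` says exactly
that `E[ZᵀY] ≥ 0` for every `Z ∈ L^p_d(K_T)`. This clearly holds when `Y ∈ K_T^+` a.s.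
Conversely, testing it against `Z = r 𝟙_{r ∈ K_T, rᵀY < 0}` shows that for each fixed `r`,
`rᵀY ≥ 0` a.s. on `{r ∈ K_T}`; running `r` through a countable dense set gives one null set
for all such `r` at once. Since `K_T + ℝ^d_+ ⊆ K_T`, every point of `K_T(ω)` is a limit of
points of the dense set lying in `K_T(ω)`, so `Y(ω) ∈ K_T^+(ω)` off that null set.
-/

open Matrix

section Pairing

variable {Ω : Type*} [MeasurableSpace Ω] {μ : Measure Ω} {d : ℕ} {p q : ℝ≥0∞}

lemma dotp_eq_dotProduct (v u : Vec d) : dotp v u = v ⬝ᵥ u := rfl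

lemma continuous_dotp (w : Vec d) : Continuous (dotp w) :=
  continuous_const.dotProduct continuous_id

lemma integrable_dotp (hpq : 1 / p + 1 / q = 1) (X : Lp (Vec d) p μ) (Y : Lp (Vec d) q μ) :
    Integrable (fun ω => dotp (X ω) (Y ω)) μ := by
  have hX (i : Fin d) : MemLp (fun ω => X ω i) p μ :=
    (ContinuousLinearMap.proj (R := ℝ) (φ := fun _ : Fin d => ℝ) i).comp_memLp' (Lp.memLp X)
  have hY (i : Fin d) : MemLp (fun ω => Y ω i) q μ :=
    (ContinuousLinearMap.proj (R := ℝ) (φ := fun _ : Fin d => ℝ) i).comp_memLp' (Lp.memLp Y)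
  refine integrable_finsetSum _ fun i _ => memLp_one_iff_integrable.mp ?_
  exact (hY i).smul (hX i) (hpqr := ⟨by simpa using hpq⟩)

lemma pairLp_zero (Y : Lp (Vec d) q μ) : pairLp (0 : Lp (Vec d) p μ) Y = 0 := by
  rw [pairLp, ← integral_zero Ω ℝ]
  refine integral_congr_ae ?_
  filter_upwards [Lp.coeFn_zero (Vec d) p μ] with ω hω
  rw [hω]
  exact zero_dotProduct _

lemma pairLp_neg (X : Lp (Vec d) p μ) (Y : Lp (Vec d) q μ) : pairLp (-X) Y = -pairLp X Y := by
  rw [pairLp, pairLp, ← integral_neg]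
  refine integral_congr_ae ?_
  filter_upwards [Lp.coeFn_neg X] with ω hω
  rw [hω]
  exact neg_dotProduct _ _

lemma pairLp_sub (hpq : 1 / p + 1 / q = 1) (X₁ X₂ : Lp (Vec d) p μ) (Y : Lp (Vec d) q μ) :
    pairLp (X₂ - X₁) Y = pairLp X₂ Y - pairLp X₁ Y := by
  rw [pairLp, pairLp, pairLp,
    ← integral_sub (integrable_dotp hpq X₂ Y) (integrable_dotp hpq X₁ Y)]
  refine integral_congr_ae ?_
  filter_upwards [Lp.coeFn_sub X₂ X₁] with ω hω
  rw [hω]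
  exact sub_dotProduct _ _ _

lemma pairLp_indicatorConstLp [IsFiniteMeasure μ] {A : Set Ω} (hA : MeasurableSet A)
    (r : Vec d) (Y : Lp (Vec d) q μ) :
    pairLp (indicatorConstLp p hA (measure_ne_top μ A) r) Y = ∫ ω in A, dotp r (Y ω) ∂μ := by
  rw [pairLp, ← integral_indicator hA]
  refine integral_congr_ae ?_
  filter_upwards [indicatorConstLp_coeFn (p := p) (hs := hA) (hμs := measure_ne_top μ A) (c := r)]
    with ω hω
  by_cases hωA : ω ∈ A <;> simp [hω, hωA, dotp_eq_dotProduct]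

theorem bMonotone_FM_neg_iff (hpq : 1 / p + 1 / q = 1) (B : Set (Lp (Vec d) p μ))
    (M : Submodule ℝ (Vec d)) (Y : Lp (Vec d) q μ) (v : Vec d) :
    BMonotone B (fun X : Lp (Vec d) p μ => FM M Y v (-X)) ↔ ∀ Z ∈ B, 0 ≤ pairLp Z Y := by
  constructor
  · intro hmono Z hZ
    have hzero : (0 : Vec d) ∈ FM M Y v (-(0 : Lp (Vec d) p μ)) :=
      ⟨M.zero_mem, by simp [pairLp_zero, dotp_eq_dotProduct]⟩
    have hZzero := (hmono 0 Z (by simpa using hZ) hzero).2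
    simp only [pairLp_neg, dotp_eq_dotProduct, dotProduct_zero] at hZzero
    linarith
  · rintro hpair X₁ X₂ hX u ⟨huM, hu⟩
    have hle := hpair _ hX
    rw [pairLp_sub hpq] at hle
    rw [pairLp_neg] at hu
    exact ⟨huM, by rw [pairLp_neg]; linarith⟩

end Pairing

section DualCone

variable {d : ℕ}

lemma IsSolvencyCone.zero_mem {K : Set (Vec d)} (hK : IsSolvencyCone K) : (0 : Vec d) ∈ K :=
  hK.2.2.2.1 fun _ => le_rfl

lemma IsSolvencyCone.add_mem_of_mem_posOrthant {K : Set (Vec d)} (hK : IsSolvencyCone K)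
    {x y : Vec d} (hx : x ∈ K) (hy : y ∈ posOrthant d) : x + y ∈ K := by
  obtain ⟨-, hconv, hcone, horth, -⟩ := hK
  have hmid : (1 / 2 : ℝ) • x + (1 / 2 : ℝ) • y ∈ K :=
    hconv hx (horth hy) (by norm_num) (by norm_num) (by norm_num)
  convert hcone 2 two_pos _ hmid using 1
  rw [smul_add, smul_smul, smul_smul]
  norm_num

/-- Points of `K` are approximated from the open upper orthant `x + int ℝ^d_+`, which stays
inside `K` and is met by every dense set. -/
lemma mem_closure_dense_inter {K S : Set (Vec d)} (hS : Dense S)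
    (hK : ∀ x ∈ K, ∀ y ∈ posOrthant d, x + y ∈ K) {x : Vec d} (hx : x ∈ K) :
    x ∈ closure (S ∩ K) := by
  refine Metric.mem_closure_iff.2 fun ε hε => ?_
  have hopen : IsOpen ({y : Vec d | ∀ i, x i < y i} ∩ Metric.ball x ε) := by
    refine IsOpen.inter ?_ Metric.isOpen_ball
    simp only [Set.ofPred_forall]
    exact isOpen_iInter_of_finite fun i => isOpen_lt continuous_const (continuous_apply i)
  have hne : ({y : Vec d | ∀ i, x i < y i} ∩ Metric.ball x ε).Nonempty := by
    refine ⟨x + fun _ => ε / 2, fun i => by simp [hε], ?_⟩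
    rw [Metric.mem_ball, dist_comm, dist_self_add_right]
    exact (pi_norm_le_iff_of_nonneg (by positivity)).2 (fun _ => by
      simp [abs_of_pos hε]) |>.trans_lt (half_lt_self hε)
  obtain ⟨r, hrS, hrx, hrε⟩ := hS.exists_mem_open hopen hne
  refine ⟨r, ⟨hrS, ?_⟩, Metric.mem_ball'.1 hrε⟩
  simpa using hK x hx (r - x) fun i => sub_nonneg.2 (hrx i).le

lemma mem_posDual_of_dense {K S : Set (Vec d)} (hS : Dense S)
    (hK : ∀ x ∈ K, ∀ y ∈ posOrthant d, x + y ∈ K) {w : Vec d}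
    (hw : ∀ r ∈ S, r ∈ K → 0 ≤ dotp w r) : w ∈ posDual K := fun _ hx =>
  closure_minimal (fun r hr => hw r hr.1 hr.2)
    (isClosed_le continuous_const (continuous_dotp w)) (mem_closure_dense_inter hS hK hx)

end DualCone

section Measurability

variable {Ω : Type*} [MeasurableSpace Ω] {μ : Measure Ω} {d : ℕ}

lemma MeasurableSetValued.measurableSet_mem {K : Ω → Set (Vec d)} (hmeas : MeasurableSetValued K)
    (hcl : ∀ ω, IsClosed (K ω)) (r : Vec d) : MeasurableSet {ω | r ∈ K ω} := by
  have hball : {ω | r ∈ K ω} =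
      ⋂ n : ℕ, {ω | (K ω ∩ Metric.ball r (1 / (n + 1))).Nonempty} := by
    ext ω
    simp only [Set.mem_iInter, Set.mem_ofPred_eq]
    refine ⟨fun h n => ⟨r, h, Metric.mem_ball_self (by positivity)⟩, fun h => ?_⟩
    rw [← (hcl ω).closure_eq, Metric.mem_closure_iff]
    intro ε hε
    obtain ⟨n, hn⟩ := exists_nat_one_div_lt hε
    obtain ⟨x, hx, hxr⟩ := h n
    exact ⟨x, hx, (Metric.mem_ball'.1 hxr).trans hn⟩
  rw [hball]
  exact MeasurableSet.iInter fun n => hmeas _ Metric.isOpen_ball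

lemma measure_eq_zero_of_setIntegral_nonneg {f : Ω → ℝ} {A : Set Ω} (hA : MeasurableSet A)
    (hf : IntegrableOn f A μ) (hneg : ∀ ω ∈ A, f ω < 0) (hint : 0 ≤ ∫ ω in A, f ω ∂μ) :
    μ A = 0 := by
  by_contra hμA
  have hsupp : Function.support (fun ω => -f ω) ∩ A = A :=
    Set.inter_eq_right.2 fun ω hω => neg_ne_zero.2 (hneg ω hω).ne
  have hpos : 0 < ∫ ω in A, -f ω ∂μ := by
    refine (setIntegral_pos_iff_support_of_nonneg_ae
      (ae_restrict_of_forall_mem hA fun ω hω => (neg_pos.2 (hneg ω hω)).le) hf.neg).2 ?_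
    rwa [hsupp, pos_iff_ne_zero]
  rw [integral_neg] at hpos
  linarith

end Measurability

section Duality

variable {Ω : Type*} [MeasurableSpace Ω] {μ : Measure Ω} [IsFiniteMeasure μ] {d : ℕ}
  {p q : ℝ≥0∞}

lemma pairLp_nonneg_of_ae_mem_posDual {K : Ω → Set (Vec d)} {Y : Lp (Vec d) q μ}
    (hY : ∀ᵐ ω ∂μ, Y ω ∈ posDual (K ω)) {Z : Lp (Vec d) p μ} (hZ : Z ∈ LpSection μ d p K) :
    0 ≤ pairLp Z Y := by
  refine integral_nonneg_of_ae ?_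
  filter_upwards [hY, hZ] with ω hYω hZω
  simpa [dotp_eq_dotProduct, dotProduct_comm] using hYω _ hZω

/-- The test variable is `r 𝟙_A` with `A = {r ∈ K, rᵀY < 0}`. -/
lemma ae_dotp_nonneg_of_pairLp_nonneg (hpq : 1 / p + 1 / q = 1) {K : Ω → Set (Vec d)}
    (hK0 : ∀ ω, (0 : Vec d) ∈ K ω) {r : Vec d} (hr : MeasurableSet {ω | r ∈ K ω})
    {Y : Lp (Vec d) q μ} (hpair : ∀ Z ∈ LpSection μ d p K, 0 ≤ pairLp Z Y) :
    ∀ᵐ ω ∂μ, r ∈ K ω → 0 ≤ dotp (Y ω) r := by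
  have hYr : Measurable fun ω => dotp r (Y ω) :=
    (continuous_dotp r).measurable.comp
      (Lp.stronglyMeasurable Y).measurable
  set A := {ω | r ∈ K ω ∧ dotp r (Y ω) < 0}
  have hA : MeasurableSet A := hr.inter (measurableSet_lt hYr measurable_const)
  have hZ : indicatorConstLp p hA (measure_ne_top μ A) r ∈ LpSection μ d p K := by
    filter_upwards [indicatorConstLp_coeFn (p := p) (hs := hA) (hμs := measure_ne_top μ A)
      (c := r)] with ω hω
    by_cases hωA : ω ∈ A
    · simpa [hω, hωA] using hωA.1
    · simpa [hω, hωA] using hK0 ω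
  have hint : Integrable (fun ω => dotp r (Y ω)) μ := by
    refine (integrable_dotp hpq (constLp μ d p r) Y).congr ?_
    filter_upwards [Lp.coeFn_const (p := p) (μ := μ) r] with ω hω
    rw [show (constLp μ d p r : Ω → Vec d) ω = r from hω]
  have hnull : μ A = 0 :=
    measure_eq_zero_of_setIntegral_nonneg hA hint.integrableOn (fun ω hω => hω.2)
      (pairLp_indicatorConstLp hA r Y ▸ hpair _ hZ)
  filter_upwards [measure_eq_zero_iff_ae_notMem.1 hnull] with ω hω hrω
  simpa [A, hrω, dotp_eq_dotProduct, dotProduct_comm] using hω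

theorem ae_mem_posDual_iff_pairLp_nonneg (hpq : 1 / p + 1 / q = 1) {K : Ω → Set (Vec d)}
    (hK : IsMarketMapKT K) (Y : Lp (Vec d) q μ) :
    (∀ᵐ ω ∂μ, Y ω ∈ posDual (K ω)) ↔ ∀ Z ∈ LpSection μ d p K, 0 ≤ pairLp Z Y := by
  refine ⟨fun hY Z hZ => pairLp_nonneg_of_ae_mem_posDual hY hZ, fun hpair => ?_⟩
  obtain ⟨S, hScount, hSdense⟩ := TopologicalSpace.exists_countable_dense (Vec d)
  have hS : ∀ᵐ ω ∂μ, ∀ r ∈ S, r ∈ K ω → 0 ≤ dotp (Y ω) r :=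
    (ae_ball_iff hScount).2 fun r _ =>
      ae_dotp_nonneg_of_pairLp_nonneg hpq (fun ω => (hK.2 ω).zero_mem)
        (hK.1.measurableSet_mem (fun ω => (hK.2 ω).1) r) hpair
  filter_upwards [hS] with ω hω
  exact mem_posDual_of_dense hSdense
    (fun _ hx _ hy => (hK.2 ω).add_mem_of_mem_posOrthant hx hy) hω

end Duality

theorem FM_KT_compatible_iff_general
    (μ : Measure Ω) [IsProbabilityMeasure μ] (d : ℕ)
    (p q : ℝ≥0∞) (hpq : 1 / p + 1 / q = 1)
    (M : Submodule ℝ (Vec d)) (KT : Ω → Set (Vec d)) (hKT : IsMarketMapKT KT)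
    (Y : Lp (Vec d) q μ) (v : Vec d) :
    BMonotone (LpSection μ d p KT) (fun X : Lp (Vec d) p μ => FM M Y v (-X)) ↔
      (∀ᵐ ω ∂μ, Y ω ∈ posDual (KT ω)) :=
  (bMonotone_FM_neg_iff hpq _ M Y v).trans (ae_mem_posDual_iff_pairLp_nonneg hpq hKT Y).symm

/-- `R(X) = F^M_{(Y,v)}[−X]` is `L^p_d(K_T)`-monotone (i.e.
`K_T`-compatible) iff `Y ∈ L^q_d(K_T^+)`. -/
theorem FM_KT_compatible_iff
    (μ : Measure Ω) [IsProbabilityMeasure μ] (d : ℕ) (hd : 1 ≤ d)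
    (p q : ℝ≥0∞) (hp : 1 ≤ p) (hpq : 1 / p + 1 / q = 1)
    (M : Submodule ℝ (Vec d)) (KT : Ω → Set (Vec d)) (hKT : IsMarketMapKT KT)
    (Y : Lp (Vec d) q μ) (v : Vec d) (hv : v ∈ M) :
    BMonotone (LpSection μ d p KT) (fun X : Lp (Vec d) p μ => FM M Y v (-X)) ↔
      (∀ᵐ ω ∂μ, Y ω ∈ posDual (KT ω)) :=
  FM_KT_compatible_iff_general μ d p q hpq M KT hKT Y v
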